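/- arXiv:1512.07474 — 8 statements merged into one kernel-verified Lean document; each statement's English description precedes it below -/
import Mathlib

section
/- Let T be a set, Y ⊆ ℝ^T a compact subspace, (Z,d) a metric space, f : Y → Z continuous, ε ≥ 0, and S ⊆ T such that d(f(y'), f(y'')) ≤ ε whenever y', y'' ∈ Y agree on S. Then for every ε' > ε there exist a finite set S₀ ⊆ S and δ > 0 such that d(f(y'), f(y'')) ≤ ε' for all y', y'' ∈ Y with |y'(s) - y''(s)| < δ for each s ∈ S₀. -/
/-!
On the compact space `Y × Y`, the closed sets of pairs that are `δ`-close on a finite `S₀ ⊆ S`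
form a directed family whose intersection is the set of pairs agreeing on `S`. The closed set of
pairs with `ε' ≤ dist (f y') (f y'')` misses that intersection, because `ε < ε'`; by compactness
it already misses a single member of the family.
-/

open Set

section

variable {T X E : Type*} [MetricSpace E]

def pairsCloseOn (u : T → X → E) (S₀ : Finset T) (δ : ℝ) : Set (X × X) :=
  {p | ∀ s ∈ S₀, dist (u s p.1) (u s p.2) ≤ δ}

theorem isClosed_pairsCloseOn [TopologicalSpace X] {u : T → X → E}
    (hu : ∀ t, Continuous (u t)) (S₀ : Finset T) (δ : ℝ) : IsClosed (pairsCloseOn u S₀ δ) := by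
  simp only [pairsCloseOn, ofPred_forall]
  exact isClosed_biInter fun s _ ↦
    isClosed_le (((hu s).comp continuous_fst).dist ((hu s).comp continuous_snd)) continuous_const

theorem pairsCloseOn_anti (u : T → X → E) {S₀ S₁ : Finset T} {δ₀ δ₁ : ℝ} (hS : S₀ ⊆ S₁)
    (hδ : δ₁ ≤ δ₀) : pairsCloseOn u S₁ δ₁ ⊆ pairsCloseOn u S₀ δ₀ :=
  fun _ hp s hs ↦ (hp s (hS hs)).trans hδ

theorem eq_of_forall_mem_pairsCloseOn_singleton {u : T → X → E} {p : X × X} {s : T}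
    (h : ∀ δ > 0, p ∈ pairsCloseOn u {s} δ) : u s p.1 = u s p.2 :=
  eq_of_forall_dist_le fun δ hδ ↦ h δ hδ s (Finset.mem_singleton_self s)

theorem exists_finset_forall_dist_lt_of_agree_on {Z : Type*} [PseudoMetricSpace Z]
    [TopologicalSpace X] [CompactSpace X] {u : T → X → E} (hu : ∀ t, Continuous (u t)) {f : X → Z}
    (hf : Continuous f) {S : Set T} {ε ε' : ℝ} (hεε' : ε < ε')
    (h : ∀ x y, (∀ s ∈ S, u s x = u s y) → dist (f x) (f y) ≤ ε) :
    ∃ S₀ : Finset T, ↑S₀ ⊆ S ∧ ∃ δ > 0,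
      ∀ x y, (∀ s ∈ S₀, dist (u s x) (u s y) < δ) → dist (f x) (f y) < ε' := by
  classical
  let ι := {q : Finset T × ℝ // ↑q.1 ⊆ S ∧ 0 < q.2}
  have : Nonempty ι := ⟨⟨(∅, 1), by simp⟩⟩
  let C : ι → Set (X × X) := fun i ↦ pairsCloseOn u i.1.1 i.1.2
  have hdir : Directed (· ⊇ ·) C := fun i j ↦
    ⟨⟨(i.1.1 ∪ j.1.1, min i.1.2 j.1.2), by simpa using ⟨i.2.1, j.2.1⟩, lt_min i.2.2 j.2.2⟩,
      pairsCloseOn_anti u Finset.subset_union_left (min_le_left _ _),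
      pairsCloseOn_anti u Finset.subset_union_right (min_le_right _ _)⟩
  let K : Set (X × X) := {p | ε' ≤ dist (f p.1) (f p.2)}
  have hK : IsClosed K :=
    isClosed_le continuous_const ((hf.comp continuous_fst).dist (hf.comp continuous_snd))
  have hdisj : K ∩ ⋂ i, C i = ∅ := by
    refine eq_empty_iff_forall_notMem.2 fun p ⟨hpK, hpC⟩ ↦ ?_
    have hagree : ∀ s ∈ S, u s p.1 = u s p.2 := fun s hs ↦
      eq_of_forall_mem_pairsCloseOn_singleton fun δ hδ ↦
        mem_iInter.1 hpC ⟨({s}, δ), by simpa using hs, hδ⟩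
    exact (h p.1 p.2 hagree).not_gt (hεε'.trans_le hpK)
  obtain ⟨⟨⟨S₀, δ⟩, hS₀, hδ⟩, hi⟩ := hK.isCompact.elim_directed_family_closed C
    (fun i ↦ isClosed_pairsCloseOn hu _ _) hdisj hdir
  refine ⟨S₀, hS₀, δ, hδ, fun x y hxy ↦ not_le.1 fun hK ↦ ?_⟩
  exact eq_empty_iff_forall_notMem.1 hi (x, y) ⟨hK, fun s hs ↦ (hxy s hs).le⟩

end

theorem stmt1_general {T Z : Type*} [MetricSpace Z] (Y : Set (T → ℝ)) (hY : IsCompact Y)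
    (f : Y → Z) (hf : Continuous f) (ε : ℝ) (S : Set T)
    (h : ∀ y' y'' : Y, (∀ s ∈ S, (y' : T → ℝ) s = (y'' : T → ℝ) s) →
      dist (f y') (f y'') ≤ ε) :
    ∀ ε' > ε, ∃ S₀ : Finset T, ↑S₀ ⊆ S ∧ ∃ δ > (0 : ℝ),
      ∀ y' y'' : Y, (∀ s ∈ S₀, |(y' : T → ℝ) s - (y'' : T → ℝ) s| < δ) →
        dist (f y') (f y'') ≤ ε' := by
  intro ε' hε'
  have : CompactSpace Y := isCompact_iff_compactSpace.1 hY
  obtain ⟨S₀, hS₀, δ, hδ, hclose⟩ := exists_finset_forall_dist_lt_of_agree_on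
    (u := fun t (y : Y) ↦ (y : T → ℝ) t)
    (fun t ↦ (continuous_apply t).comp continuous_subtype_val) hf hε' h
  exact ⟨S₀, hS₀, δ, hδ, fun y' y'' hy ↦ (hclose y' y'' hy).le⟩

/-- Proposition 2.2: if a continuous map on a compact `Y ⊆ ℝ^T` into a metric
space varies by at most `ε` over pairs agreeing on `S`, then for every
`ε' > ε` the `ε'`-bound holds on pairs that are `δ`-close on some finite
`S₀ ⊆ S`. -/
theorem stmt1 {T Z : Type*} [MetricSpace Z] (Y : Set (T → ℝ)) (hY : IsCompact Y)
    (f : Y → Z) (hf : Continuous f) (ε : ℝ) (hε : 0 ≤ ε) (S : Set T)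
    (h : ∀ y' y'' : Y, (∀ s ∈ S, (y' : T → ℝ) s = (y'' : T → ℝ) s) →
      dist (f y') (f y'') ≤ ε) :
    ∀ ε' > ε, ∃ S₀ : Finset T, ↑S₀ ⊆ S ∧ ∃ δ > (0 : ℝ),
      ∀ y' y'' : Y, (∀ s ∈ S₀, |(y' : T → ℝ) s - (y'' : T → ℝ) s| < δ) →
        dist (f y') (f y'') ≤ ε' :=
  stmt1_general Y hY f hf ε S h
end

section
/- Let T be a set, X ⊆ ℝ^T a compact subspace, S a set, φ : X → ℝ^S a continuous mapping, and S₀ ⊆ S a countable subset. Then there exists a countable set T₀ ⊆ T such that φ(x')|_{S₀} = φ(x'')|_{S₀} for all x', x'' ∈ X with x'|_{T₀} = x''|_{T₀}. -/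
/-!
On the compact space `X` the map `x ↦ (φ x s)_{s ∈ S₀}` into the countable product `ℝ^{S₀}` is
uniformly continuous, and the uniformity of `ℝ^{S₀}` has a countable basis `Vₙ`. Every entourage
of the product `ℝ^T` contains all pairs agreeing on a finite set of coordinates, so there are
finite `Fₙ ⊆ T` such that points of `X` agreeing on `Fₙ` have `Vₙ`-close images. Points agreeing
on `T₀ = ⋃ₙ Fₙ` then have images that are `Vₙ`-close for every `n`, hence equal.
-/

open Filter Set
open scoped Uniformity

theorem Pi.exists_finite_forall_eq_imp_mem_of_mem_uniformity {ι : Type*} {α : ι → Type*}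
    [∀ i, UniformSpace (α i)] {U : Set ((∀ i, α i) × (∀ i, α i))} (hU : U ∈ 𝓤 (∀ i, α i)) :
    ∃ F : Set ι, F.Finite ∧ ∀ x y : ∀ i, α i, (∀ i ∈ F, x i = y i) → (x, y) ∈ U := by
  rw [Pi.uniformity] at hU
  obtain ⟨F, hF, V, hV, rfl⟩ := mem_iInf.mp hU
  refine ⟨F, hF, fun x y hxy => mem_iInter.mpr fun i => ?_⟩
  obtain ⟨W, hW, hWV⟩ := mem_comap.mp (hV i)
  apply hWV
  simpa only [mem_preimage, hxy i i.2] using refl_mem_uniformity hW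

theorem UniformContinuous.exists_countable_forall_eq_imp_eq {ι β : Type*} {α : ι → Type*}
    [∀ i, UniformSpace (α i)] [UniformSpace β] [IsCountablyGenerated (𝓤 β)] [T0Space β]
    {X : Set (∀ i, α i)} {f : X → β} (hf : UniformContinuous f) :
    ∃ I : Set ι, I.Countable ∧
      ∀ x y : X, (∀ i ∈ I, (x : ∀ i, α i) i = (y : ∀ i, α i) i) → f x = f y := by
  obtain ⟨V, hV⟩ := (𝓤 β).exists_antitone_basis
  have hfinite : ∀ n, ∃ F : Set ι, F.Finite ∧
      ∀ x y : X, (∀ i ∈ F, (x : ∀ i, α i) i = (y : ∀ i, α i) i) → (f x, f y) ∈ V n := by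
    intro n
    obtain ⟨U, hU, hUV⟩ := mem_comap.mp (hf (hV.mem n))
    obtain ⟨F, hF, hFU⟩ := Pi.exists_finite_forall_eq_imp_mem_of_mem_uniformity hU
    exact ⟨F, hF, fun x y hxy => @hUV (x, y) (hFU x y hxy)⟩
  choose F hF hFV using hfinite
  refine ⟨⋃ n, F n, countable_iUnion fun n => (hF n).countable, fun x y hxy => ?_⟩
  exact eq_of_uniformity_basis hV.toHasBasis fun {n} _ =>
    hFV n x y fun i hi => hxy i (mem_iUnion_of_mem n hi)

/-- Corollary 2.3: a continuous map from a compact `X ⊆ ℝ^T` to `ℝ^S` depends,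
on any countable set of target coordinates `S₀`, upon countably many
coordinates `T₀ ⊆ T`. -/
theorem stmt2 {T S : Type*} (X : Set (T → ℝ)) (hX : IsCompact X)
    (φ : X → S → ℝ) (hφ : Continuous φ) (S₀ : Set S) (hS₀ : S₀.Countable) :
    ∃ T₀ : Set T, T₀.Countable ∧
      ∀ x' x'' : X, (∀ t ∈ T₀, (x' : T → ℝ) t = (x'' : T → ℝ) t) →
        ∀ s ∈ S₀, φ x' s = φ x'' s := by
  have : CompactSpace X := isCompact_iff_compactSpace.mp hX
  have : Countable S₀ := hS₀.to_subtype
  let φ₀ : X → S₀ → ℝ := fun x s => φ x s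
  have hφ₀ : UniformContinuous φ₀ := CompactSpace.uniformContinuous_of_continuous <|
    continuous_pi fun s => (continuous_apply (s : S)).comp hφ
  obtain ⟨T₀, hT₀, hφ₀T₀⟩ := hφ₀.exists_countable_forall_eq_imp_eq
  exact ⟨T₀, hT₀, fun x' x'' hx s hs => congrFun (hφ₀T₀ x' x'' hx) ⟨s, hs⟩⟩
end

section
/- Let X be a Baire space, T a set, Y ⊆ ℝ^T a compact subspace, and f : X × Y → ℝ a separately continuous function. Suppose that for every nonempty open set U ⊆ X and every ε > 0 there exist a nonempty open set U' ⊆ U and a countable set S' ⊆ T such that |f(x,y') - f(x,y'')| ≤ ε for all x ∈ U' and all y', y'' ∈ Y with y'|_{S'} = y''|_{S'}. Then for every nonempty open U ⊆ X and every ε > 0 there exist a nonempty open U₀ ⊆ U, a finite set S₀ ⊆ T, and δ > 0 such that |f(x,y') - f(x,y'')| ≤ ε for all x ∈ U₀ and all y', y'' ∈ Y with |y'(s) - y''(s)| < δ for every s ∈ S₀. -/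
/-!
Fix `U' ⊆ U` and a countable `S' ⊆ T` on which `f x` oscillates by at most `ε / 2` over pairs
agreeing on `S'`. For each `x ∈ U'`, the open set `{(y', y'') | |f x y' - f x y''| < ε}` of the
compact space `Y × Y` contains the closed set of pairs agreeing on `S'`, which is the decreasing
intersection of the closed sets `|y' s - y'' s| ≤ 1 / (n + 1)` for `s` in a finite `F ⊆ S'`; so one
of these already lies inside it. This covers `U'` by countably many closed sets, indexed by the
pairs `(F, n)`, and the Baire property makes one of them contain a nonempty open set.
-/

open Topology Set

theorem exists_finset_forall_abs_le_subset {Z ι : Type*} [TopologicalSpace Z] [CompactSpace Z]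
    {ψ : ι → Z → ℝ} (hψ : ∀ i, Continuous (ψ i)) {W : Set Z} (hW : IsOpen W)
    (hzero : {z | ∀ i, ψ i z = 0} ⊆ W) :
    ∃ (F : Finset ι) (n : ℕ), {z | ∀ i ∈ F, |ψ i z| ≤ 1 / (n + 1)} ⊆ W := by
  classical
  let V : Finset ι × ℕ → Set Z := fun k => {z | ∀ i ∈ k.1, |ψ i z| ≤ 1 / (k.2 + 1)}
  have hV_closed : ∀ k, IsClosed (V k) := fun k => by
    simpa only [V, ofPred_forall] using isClosed_iInter fun i =>
      isClosed_iInter fun _ => isClosed_le (hψ i).abs continuous_const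
  have hV_directed : Directed (· ⊇ ·) V := by
    rintro ⟨F₁, n₁⟩ ⟨F₂, n₂⟩
    refine ⟨(F₁ ∪ F₂, max n₁ n₂), ?_, ?_⟩ <;> intro z hz i hi <;>
      refine (hz i (by simp [hi])).trans (one_div_le_one_div_of_le (by positivity) ?_) <;>
      simp
  have hV_inter : ∀ z ∈ ⋂ k, V k, W ∈ 𝓝 z := by
    intro z hz
    refine hW.mem_nhds (hzero fun i => abs_nonpos_iff.1 ?_)
    refine ge_of_tendsto' tendsto_one_div_add_atTop_nhds_zero_nat fun n => ?_
    exact mem_iInter.1 hz ({i}, n) i (Finset.mem_singleton_self i)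
  obtain ⟨⟨F, n⟩, hFn⟩ := exists_subset_nhds_of_isCompact' hV_directed
    (fun k => (hV_closed k).isCompact) hV_closed hV_inter
  exact ⟨F, n, hFn⟩

theorem exists_isOpen_nonempty_subset_of_subset_iUnion_isClosed {X ι : Type*}
    [TopologicalSpace X] [BaireSpace X] [Countable ι] {E : ι → Set X} (hE : ∀ i, IsClosed (E i))
    {U : Set X} (hU : IsOpen U) (hne : U.Nonempty) (hcover : U ⊆ ⋃ i, E i) :
    ∃ i, ∃ V : Set X, IsOpen V ∧ V.Nonempty ∧ V ⊆ U ∩ E i := by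
  obtain ⟨i₀, -⟩ := mem_iUnion.1 (hcover hne.some_mem)
  have hunion : ⋃ i, (E i ∪ Uᶜ) = univ := by
    refine eq_univ_of_forall fun x => ?_
    by_cases hx : x ∈ U
    · obtain ⟨i, hi⟩ := mem_iUnion.1 (hcover hx)
      exact mem_iUnion.2 ⟨i, Or.inl hi⟩
    · exact mem_iUnion.2 ⟨i₀, Or.inr hx⟩
  obtain ⟨x, hx, hxU⟩ := (dense_iUnion_interior_of_closed
    (fun i => (hE i).union hU.isClosed_compl) hunion).exists_mem_open hU hne
  obtain ⟨i, hxi⟩ := mem_iUnion.1 hx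
  refine ⟨i, U ∩ interior (E i ∪ Uᶜ), hU.inter isOpen_interior, ⟨x, hxU, hxi⟩, ?_⟩
  rintro y ⟨hyU, hy⟩
  exact ⟨hyU, (interior_subset hy).resolve_right (not_not_intro hyU)⟩

/-- Theorem 2.4, (ii) ⇒ (iii): for a separately continuous function on the
product of a Baire space and a compact `Y ⊆ ℝ^T`, the countable-coordinate
dependence condition implies the finite-coordinate `δ`-dependence condition. -/
theorem stmt5 {X T : Type*} [TopologicalSpace X] [BaireSpace X]
    (Y : Set (T → ℝ)) (hY : IsCompact Y) (f : X → Y → ℝ)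
    (hf1 : ∀ y : Y, Continuous fun x => f x y) (hf2 : ∀ x : X, Continuous (f x))
    (H : ∀ U : Set X, IsOpen U → U.Nonempty → ∀ ε > (0 : ℝ),
      ∃ U' : Set X, IsOpen U' ∧ U'.Nonempty ∧ U' ⊆ U ∧
        ∃ S' : Set T, S'.Countable ∧
          ∀ x ∈ U', ∀ y' y'' : Y, (∀ s ∈ S', (y' : T → ℝ) s = (y'' : T → ℝ) s) →
            |f x y' - f x y''| ≤ ε) :
    ∀ U : Set X, IsOpen U → U.Nonempty → ∀ ε > (0 : ℝ),
      ∃ U₀ : Set X, IsOpen U₀ ∧ U₀.Nonempty ∧ U₀ ⊆ U ∧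
        ∃ S₀ : Finset T, ∃ δ > (0 : ℝ),
          ∀ x ∈ U₀, ∀ y' y'' : Y,
            (∀ s ∈ S₀, |(y' : T → ℝ) s - (y'' : T → ℝ) s| < δ) →
              |f x y' - f x y''| ≤ ε := by
  intro U hU hUne ε hε
  obtain ⟨U', hU'o, hU'ne, hU'U, S', hS', hS'f⟩ := H U hU hUne (ε / 2) (half_pos hε)
  have : CompactSpace Y := isCompact_iff_compactSpace.mp hY
  have : Countable S' := hS'.to_subtype
  let V : Finset S' × ℕ → Set (Y × Y) := fun k =>
    {p | ∀ s ∈ k.1, |(p.1 : T → ℝ) s - (p.2 : T → ℝ) s| ≤ 1 / (k.2 + 1)}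
  let E : Finset S' × ℕ → Set X := fun k => {x | ∀ p ∈ V k, |f x p.1 - f x p.2| ≤ ε}
  have hE : ∀ k, IsClosed (E k) := fun k => by
    simp only [E, ofPred_forall]
    exact isClosed_biInter fun p _ => isClosed_le ((hf1 p.1).sub (hf1 p.2)).abs continuous_const
  have hcover : U' ⊆ ⋃ k, E k := by
    intro x hx
    obtain ⟨F, n, hFn⟩ := exists_finset_forall_abs_le_subset
      (ψ := fun (s : S') (p : Y × Y) => (p.1 : T → ℝ) s - (p.2 : T → ℝ) s) (fun s =>
        ((continuous_apply _).comp (continuous_subtype_val.comp continuous_fst)).sub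
        ((continuous_apply _).comp (continuous_subtype_val.comp continuous_snd)))
      (W := {p | |f x p.1 - f x p.2| < ε}) (isOpen_lt (by fun_prop) continuous_const)
      fun p hp => (hS'f x hx p.1 p.2 fun s hs => sub_eq_zero.1 (hp ⟨s, hs⟩)).trans_lt
        (half_lt_self hε)
    exact mem_iUnion.2 ⟨(F, n), fun p hp => (hFn hp).le⟩
  obtain ⟨⟨F, n⟩, U₀, hU₀o, hU₀ne, hU₀⟩ :=
    exists_isOpen_nonempty_subset_of_subset_iUnion_isClosed hE hU'o hU'ne hcover
  refine ⟨U₀, hU₀o, hU₀ne, fun x hx => hU'U (hU₀ hx).1, F.map (Function.Embedding.subtype _),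
    1 / (n + 1), by positivity, fun x hx y' y'' hy => (hU₀ hx).2 (y', y'') fun s hs => ?_⟩
  exact (hy s (Finset.mem_map_of_mem _ hs)).le
end

section
/- Let X be a topological space, T a set, Y ⊆ ℝ^T a compact subspace, and f : X × Y → ℝ a separately continuous function. Suppose that for every nonempty open set U ⊆ X and every ε > 0 there exist a nonempty open set U₀ ⊆ U, a finite set S₀ ⊆ T, and δ > 0 such that |f(x,y') - f(x,y'')| ≤ ε for all x ∈ U₀ and all y', y'' ∈ Y with |y'(s) - y''(s)| < δ for each s ∈ S₀. Then for every ε > 0 the set G_ε = {x ∈ X : ω_f(x,y) < ε for all y ∈ Y} is open and dense in X. -/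
/-!
Openness: `{p | ω_f(p) < ε}` is open because the oscillation is upper semicontinuous, and
since `Y` is compact the tube lemma turns this into openness of `G_ε`.
Density: given a nonempty open `U`, the hypothesis provides `U₀ ⊆ U` on which `f(x, ·)` moves
by at most `ε/5` over a basic neighbourhood of `y` determined by finitely many coordinates;
combined with continuity of `f(·, y)`, the triangle inequality through `(x', y)` bounds
the oscillation at every point of `U₀ × Y` by `4ε/5`.
-/

open Topology

/-- The oscillation of a real-valued function at a point: the infimum over
neighborhoods `U` of the supremum of `|f p - f q|` over `p, q ∈ U`
(valued in `ℝ≥0∞`). -/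
noncomputable def osc {α : Type*} [TopologicalSpace α] (f : α → ℝ) (x : α) : ENNReal :=
  ⨅ U ∈ 𝓝 x, ⨆ p ∈ U, ⨆ q ∈ U, ENNReal.ofReal |f p - f q|

open Filter

theorem osc_le_ofReal_of_mem_nhds {α : Type*} [TopologicalSpace α] {f : α → ℝ} {a : α}
    {W : Set α} (hW : W ∈ 𝓝 a) {C : ℝ} (h : ∀ p ∈ W, ∀ q ∈ W, |f p - f q| ≤ C) :
    osc f a ≤ ENNReal.ofReal C :=
  (iInf₂_le W hW).trans <| iSup₂_le fun p hp => iSup₂_le fun q hq =>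
    ENNReal.ofReal_le_ofReal (h p hp q hq)

theorem isOpen_setOf_osc_lt {α : Type*} [TopologicalSpace α] (f : α → ℝ) (c : ENNReal) :
    IsOpen {a | osc f a < c} := by
  rw [isOpen_iff_mem_nhds]
  intro a ha
  obtain ⟨W, hW, hlt⟩ : ∃ W ∈ 𝓝 a, (⨆ p ∈ W, ⨆ q ∈ W, ENNReal.ofReal |f p - f q|) < c := by
    simpa only [Set.mem_ofPred_eq, osc, iInf_lt_iff, exists_prop] using ha
  filter_upwards [eventually_mem_nhds_iff.mpr hW] with b hb
  exact (iInf₂_le W hb).trans_lt hlt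

theorem isOpen_setOf_forall_osc_lt {α β : Type*} [TopologicalSpace α] [TopologicalSpace β]
    [CompactSpace β] (f : α × β → ℝ) (c : ENNReal) :
    IsOpen {x : α | ∀ y, osc f (x, y) < c} := by
  rw [isOpen_iff_eventually]
  intro x hx
  simpa only [Set.mem_ofPred_eq, Set.mem_univ, forall_const] using
    isCompact_univ.eventually_forall_of_forall_eventually (P := fun x y => osc f (x, y) < c)
      fun y _ => (isOpen_setOf_osc_lt f c).mem_nhds (hx y)

theorem osc_prod_le_of_eventually_abs_sub_le {α β : Type*} [TopologicalSpace α]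
    [TopologicalSpace β] {f : α × β → ℝ} {x : α} {y : β} {η : ℝ} (hη : 0 < η)
    (hcont : ContinuousAt (fun x' => f (x', y)) x)
    (hnear : ∀ᶠ p in 𝓝 (x, y), |f p - f (p.1, y)| ≤ η) :
    osc f (x, y) ≤ ENNReal.ofReal (4 * η) := by
  have hslice : ∀ᶠ p : α × β in 𝓝 (x, y), |f (p.1, y) - f (x, y)| < η := by
    simpa only [Real.dist_eq, Function.comp_apply] using
      Metric.tendsto_nhds.mp (hcont.tendsto.comp (continuous_fst.tendsto (x, y))) η hη
  refine osc_le_ofReal_of_mem_nhds (hnear.and hslice) ?_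
  rintro p ⟨hp, hpy⟩ q ⟨hq, hqy⟩
  rw [abs_sub_comm] at hq
  calc |f p - f q|
      ≤ |f p - f (p.1, y)| + |f (p.1, y) - f (x, y)| + |f (x, y) - f (q.1, y)|
          + |f (q.1, y) - f q| := by
        have := abs_sub_le (f p) (f (p.1, y)) (f q)
        have := abs_sub_le (f (p.1, y)) (f (x, y)) (f q)
        have := abs_sub_le (f (x, y)) (f (q.1, y)) (f q)
        linarith
    _ ≤ 4 * η := by rw [abs_sub_comm (f (x, y))]; linarith

theorem setOf_forall_abs_sub_lt_mem_nhds {T : Type*} (S : Finset T) {δ : ℝ} (hδ : 0 < δ)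
    (z : T → ℝ) : {w : T → ℝ | ∀ s ∈ S, |w s - z s| < δ} ∈ 𝓝 z := by
  change ∀ᶠ w in 𝓝 z, ∀ s ∈ S, |w s - z s| < δ
  rw [eventually_all_finset]
  intro s _
  simpa only [Real.dist_eq] using Metric.tendsto_nhds.mp ((continuous_apply s).tendsto z) δ hδ

theorem stmt6_general {X T : Type*} [TopologicalSpace X]
    (Y : Set (T → ℝ)) (hY : IsCompact Y) (f : X → Y → ℝ)
    (hf1 : ∀ y : Y, Continuous fun x => f x y)
    (H : ∀ U : Set X, IsOpen U → U.Nonempty → ∀ ε > (0 : ℝ),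
      ∃ U₀ : Set X, IsOpen U₀ ∧ U₀.Nonempty ∧ U₀ ⊆ U ∧
        ∃ S₀ : Finset T, ∃ δ > (0 : ℝ),
          ∀ x ∈ U₀, ∀ y' y'' : Y,
            (∀ s ∈ S₀, |(y' : T → ℝ) s - (y'' : T → ℝ) s| < δ) →
              |f x y' - f x y''| ≤ ε) :
    ∀ ε > (0 : ℝ),
      IsOpen {x : X | ∀ y : Y, osc (fun p : X × Y => f p.1 p.2) (x, y) < ENNReal.ofReal ε} ∧
      Dense {x : X | ∀ y : Y, osc (fun p : X × Y => f p.1 p.2) (x, y) < ENNReal.ofReal ε} := by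
  intro ε hε
  have : CompactSpace Y := isCompact_iff_compactSpace.mp hY
  refine ⟨isOpen_setOf_forall_osc_lt _ _, dense_iff_inter_open.mpr fun U hU hUne => ?_⟩
  obtain ⟨U₀, hU₀, ⟨x, hx⟩, hU₀U, S₀, δ, hδ, hclose⟩ := H U hU hUne (ε / 5) (by positivity)
  refine ⟨x, hU₀U hx, fun y => ?_⟩
  have hnear : ∀ᶠ p : X × Y in 𝓝 (x, y), |f p.1 p.2 - f p.1 y| ≤ ε / 5 := by
    have hcoord := continuous_subtype_val.continuousAt.preimage_mem_nhds
      (setOf_forall_abs_sub_lt_mem_nhds S₀ hδ (y : T → ℝ))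
    filter_upwards [prod_mem_nhds (hU₀.mem_nhds hx) hcoord] with p ⟨hp₁, hp₂⟩
    exact hclose p.1 hp₁ p.2 y hp₂
  calc osc _ (x, y)
      ≤ ENNReal.ofReal (4 * (ε / 5)) :=
        osc_prod_le_of_eventually_abs_sub_le (by positivity) (hf1 y).continuousAt hnear
    _ < ENNReal.ofReal ε := (ENNReal.ofReal_lt_ofReal_iff hε).mpr (by linarith)

/-- Theorem 2.4, (iii) ⇒ (i), main step: under the finite-coordinate
`δ`-dependence condition, for every `ε > 0` the set
`G_ε = {x : ω_f(x,y) < ε for all y ∈ Y}` is open and dense. -/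
theorem stmt6 {X T : Type*} [TopologicalSpace X]
    (Y : Set (T → ℝ)) (hY : IsCompact Y) (f : X → Y → ℝ)
    (hf1 : ∀ y : Y, Continuous fun x => f x y) (hf2 : ∀ x : X, Continuous (f x))
    (H : ∀ U : Set X, IsOpen U → U.Nonempty → ∀ ε > (0 : ℝ),
      ∃ U₀ : Set X, IsOpen U₀ ∧ U₀.Nonempty ∧ U₀ ⊆ U ∧
        ∃ S₀ : Finset T, ∃ δ > (0 : ℝ),
          ∀ x ∈ U₀, ∀ y' y'' : Y,
            (∀ s ∈ S₀, |(y' : T → ℝ) s - (y'' : T → ℝ) s| < δ) →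
              |f x y' - f x y''| ≤ ε) :
    ∀ ε > (0 : ℝ),
      IsOpen {x : X | ∀ y : Y, osc (fun p : X × Y => f p.1 p.2) (x, y) < ENNReal.ofReal ε} ∧
      Dense {x : X | ∀ y : Y, osc (fun p : X × Y => f p.1 p.2) (x, y) < ENNReal.ofReal ε} :=
  stmt6_general Y hY f hf1 H
end

section
/- Let X be a Baire space, T a set, Y ⊆ ℝ^T a compact subspace, and f : X × Y → ℝ separately continuous. If f has the Namioka property (there is a dense G_δ set A ⊆ X with f jointly continuous at every point of A × Y), then for every nonempty open U ⊆ X and every ε > 0 there exist a nonempty open U₀ ⊆ U and a countable set S₀ ⊆ T such that |f(x,y') - f(x,y'')| ≤ ε for all x ∈ U₀ and all y', y'' ∈ Y with y'|_{S₀} = y''|_{S₀}. -/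
/-!
Pick `a ∈ U` in the dense set `A`. Joint continuity of `f` along the compact fibre `{a} × Y`
gives, by the tube lemma, a neighbourhood `W` of `a` on which `f x ·` stays uniformly
`ε/3`-close to `f a ·`. On the other hand `f a ·` is uniformly continuous on the compact `Y`,
and every entourage of the product uniformity of `ℝ^T` contains all pairs that agree on some
finite set of coordinates; so `f a ·` varies by less than `ε/3` between points agreeing on a
finite `S₀ ⊆ T`. Then `U₀ = U ∩ W` works.
-/

open Topology Filter Uniformity

theorem exists_finset_forall_eq_imp_mem_of_mem_uniformity_pi {ι : Type*} {α : ι → Type*}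
    [∀ i, UniformSpace (α i)] {V : Set ((∀ i, α i) × (∀ i, α i))} (hV : V ∈ 𝓤 (∀ i, α i)) :
    ∃ I : Finset ι, ∀ x y : ∀ i, α i, (∀ i ∈ I, x i = y i) → (x, y) ∈ V := by
  rw [Pi.uniformity, mem_iInf'] at hV
  obtain ⟨I, hI, W, hW, -, rfl, -⟩ := hV
  refine ⟨hI.toFinset, fun x y hxy => Set.mem_iInter₂.2 fun i hi => ?_⟩
  obtain ⟨D, hD, hDW⟩ := mem_comap.1 (hW i)
  have hdiag : (x i, y i) ∈ D := hxy i (hI.mem_toFinset.2 hi) ▸ refl_mem_uniformity hD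
  exact hDW hdiag

theorem exists_finset_dist_lt_of_forall_eq {ι : Type*} {α : ι → Type*}
    [∀ i, UniformSpace (α i)] {M : Type*} [PseudoMetricSpace M] {Y : Set (∀ i, α i)}
    [CompactSpace Y] {h : Y → M} (hh : Continuous h) {ε : ℝ} (hε : 0 < ε) :
    ∃ I : Finset ι, ∀ y' y'' : Y, (∀ i ∈ I, (y' : ∀ i, α i) i = (y'' : ∀ i, α i) i) →
      dist (h y') (h y'') < ε := by
  have hV : {p : Y × Y | dist (h p.1) (h p.2) < ε} ∈ 𝓤 Y :=
    CompactSpace.uniformContinuous_of_continuous hh (Metric.dist_mem_uniformity hε)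
  rw [uniformity_subtype] at hV
  obtain ⟨V, hV, hVsub⟩ := mem_comap.1 hV
  obtain ⟨I, hI⟩ := exists_finset_forall_eq_imp_mem_of_mem_uniformity_pi hV
  exact ⟨I, fun y' y'' hy => hVsub (a := (y', y'')) (hI _ _ hy)⟩

theorem eventually_forall_dist_lt_of_continuousAt_uncurry {X Y M : Type*} [TopologicalSpace X]
    [TopologicalSpace Y] [CompactSpace Y] [PseudoMetricSpace M] {g : X → Y → M} {a : X}
    (hg : ∀ y, ContinuousAt (Function.uncurry g) (a, y)) {ε : ℝ} (hε : 0 < ε) :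
    ∀ᶠ x in 𝓝 a, ∀ y, dist (g x y) (g a y) < ε := by
  have hga : ∀ y, ContinuousAt (g a) y := fun y =>
    (hg y).comp (continuousAt_const.prodMk continuousAt_id)
  have hnear : ∀ y, ∀ᶠ z : X × Y in 𝓝 (a, y), dist (g z.1 z.2) (g a z.2) < ε := fun y => by
    filter_upwards [(hg y).eventually (Metric.ball_mem_nhds _ (half_pos hε)),
      continuousAt_snd.eventually ((hga y).eventually (Metric.ball_mem_nhds _ (half_pos hε)))]
      with z hz hz'
    calc dist (g z.1 z.2) (g a z.2) ≤ dist (g z.1 z.2) (g a y) + dist (g a z.2) (g a y) :=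
          dist_triangle_right _ _ _
      _ < ε / 2 + ε / 2 := add_lt_add hz hz'
      _ = ε := add_halves ε
  simpa using isCompact_univ.eventually_forall_of_forall_eventually fun y _ => hnear y

theorem stmt7_general {X T : Type*} [TopologicalSpace X]
    (Y : Set (T → ℝ)) (hY : IsCompact Y) (f : X → Y → ℝ)
    (hNamioka : ∃ A : Set X, Dense A ∧ IsGδ A ∧
      ∀ a ∈ A, ∀ y : Y, ContinuousAt (fun p : X × Y => f p.1 p.2) (a, y)) :
    ∀ U : Set X, IsOpen U → U.Nonempty → ∀ ε > (0 : ℝ),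
      ∃ U₀ : Set X, IsOpen U₀ ∧ U₀.Nonempty ∧ U₀ ⊆ U ∧
        ∃ S₀ : Set T, S₀.Countable ∧
          ∀ x ∈ U₀, ∀ y' y'' : Y, (∀ s ∈ S₀, (y' : T → ℝ) s = (y'' : T → ℝ) s) →
            |f x y' - f x y''| ≤ ε := by
  obtain ⟨A, hAd, -, hA⟩ := hNamioka
  intro U hU hUne ε hε
  have : CompactSpace Y := isCompact_iff_compactSpace.mp hY
  obtain ⟨a, haU, haA⟩ := hAd.inter_open_nonempty U hU hUne
  have hε3 : 0 < ε / 3 := by positivity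
  obtain ⟨W, hWnear, hWopen, haW⟩ := eventually_nhds_iff.1
    (eventually_forall_dist_lt_of_continuousAt_uncurry (hA a haA) hε3)
  obtain ⟨I, hI⟩ := exists_finset_dist_lt_of_forall_eq
    (continuous_iff_continuousAt.2 fun y => (hA a haA y).comp
      (continuousAt_const.prodMk continuousAt_id)) hε3
  refine ⟨U ∩ W, hU.inter hWopen, ⟨a, haU, haW⟩, Set.inter_subset_left, I, I.countable_toSet,
    fun x hx y' y'' hy => ?_⟩
  calc |f x y' - f x y''| = dist (f x y') (f x y'') := (Real.dist_eq _ _).symm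
    _ ≤ dist (f x y') (f a y') + dist (f x y'') (f a y'') + dist (f a y') (f a y'') :=
        dist_triangle4_right ..
    _ ≤ ε / 3 + ε / 3 + ε / 3 := by
        gcongr
        exacts [(hWnear x hx.2 y').le, (hWnear x hx.2 y'').le, (hI y' y'' hy).le]
    _ = ε := by ring

/-- Theorem 2.4, (i) ⇒ (ii): if a separately continuous function on the
product of a Baire space and a compact `Y ⊆ ℝ^T` has the Namioka property,
then it satisfies the countable-coordinate dependence condition. -/
theorem stmt7 {X T : Type*} [TopologicalSpace X] [BaireSpace X]
    (Y : Set (T → ℝ)) (hY : IsCompact Y) (f : X → Y → ℝ)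
    (hf1 : ∀ y : Y, Continuous fun x => f x y) (hf2 : ∀ x : X, Continuous (f x))
    (hNamioka : ∃ A : Set X, Dense A ∧ IsGδ A ∧
      ∀ a ∈ A, ∀ y : Y, ContinuousAt (fun p : X × Y => f p.1 p.2) (a, y)) :
    ∀ U : Set X, IsOpen U → U.Nonempty → ∀ ε > (0 : ℝ),
      ∃ U₀ : Set X, IsOpen U₀ ∧ U₀.Nonempty ∧ U₀ ⊆ U ∧
        ∃ S₀ : Set T, S₀.Countable ∧
          ∀ x ∈ U₀, ∀ y' y'' : Y, (∀ s ∈ S₀, (y' : T → ℝ) s = (y'' : T → ℝ) s) →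
            |f x y' - f x y''| ≤ ε :=
  stmt7_general Y hY f hNamioka
end

section
/- Let X be a topological space and let 𝒦 be the collection of all nonempty sets E ⊆ X such that for every compact Y ⊆ C_p(X), the image φ_E(Y) is a Corson compact, where φ_E : C_p(X) → C_p(E) is the restriction map y ↦ y|_E. Then 𝒦 is closed under finite unions: if E₁, E₂ ∈ 𝒦 then E₁ ∪ E₂ ∈ 𝒦. -/
universe u v

/-- A Corson compact: a compact space homeomorphic to a compact `Z ⊆ ℝ^S`
in which every point has countable support. -/
def IsCorsonCompact (K : Type u) [TopologicalSpace K] : Prop :=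
  CompactSpace K ∧ ∃ (S : Type v) (Z : Set (S → ℝ)), IsCompact Z ∧
    (∀ z ∈ Z, {s : S | z s ≠ 0}.Countable) ∧ Nonempty (K ≃ₜ Z)

/-- Membership in the system `𝒦`: `E` is a nonempty subset of `X` such that
the image of every compact subset of `C_p(X)` under the restriction map
`y ↦ y|_E` is a Corson compact. -/
def MemK {X : Type u} [TopologicalSpace X] (E : Set X) : Prop :=
  E.Nonempty ∧ ∀ Y : Set (X → ℝ), (∀ y ∈ Y, Continuous y) → IsCompact Y →
    IsCorsonCompact.{u, u} ((fun (y : X → ℝ) (e : E) => y e) '' Y)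

/-! The map `y|_{E₁ ∪ E₂} ↦ (y|_{E₁}, y|_{E₂})` is a continuous injection of the compact
`φ_{E₁ ∪ E₂}(Y)` into `φ_{E₁}(Y) × φ_{E₂}(Y)`, hence an embedding. Corson compacta are closed
under finite products (concatenate the coordinates in `ℝ^(S ⊕ T)`) and under passing to compact
spaces that inject continuously into them. -/

universe w

open Function Set

theorem Set.Countable.support_sumElim {S T M : Type*} [Zero M] {a : S → M} {b : T → M}
    (ha : (support a).Countable) (hb : (support b).Countable) :
    (support (Sum.elim a b)).Countable := by
  rw [support_eq_preimage, preimage_sumElim]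
  exact (ha.image _).union (hb.image _)

namespace IsCorsonCompact

variable {K L : Type*} [TopologicalSpace K] [TopologicalSpace L]

theorem of_continuous_injective_pi [CompactSpace K] {S : Type v} {f : K → S → ℝ}
    (hf : Continuous f) (hinj : Injective f) (hsupp : ∀ k, (support (f k)).Countable) :
    IsCorsonCompact.{_, v} K :=
  ⟨‹_›, S, range f, isCompact_range hf, by rintro _ ⟨k, rfl⟩; exact hsupp k,
    ⟨(hf.isClosedEmbedding hinj).isEmbedding.toHomeomorph⟩⟩

theorem of_continuous_injective [CompactSpace K] (hL : IsCorsonCompact.{_, v} L) {g : K → L}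
    (hg : Continuous g) (hinj : Injective g) : IsCorsonCompact.{_, v} K := by
  obtain ⟨-, S, Z, -, hZ, ⟨e⟩⟩ := hL
  exact of_continuous_injective_pi (f := fun k => (e (g k) : S → ℝ)) (by fun_prop)
    (Subtype.val_injective.comp (e.injective.comp hinj)) fun k => hZ _ (e (g k)).2

theorem prod (hK : IsCorsonCompact.{_, v} K) (hL : IsCorsonCompact.{_, w} L) :
    IsCorsonCompact.{_, max v w} (K × L) := by
  obtain ⟨hKc, S, Z, -, hZ, ⟨e⟩⟩ := hK
  obtain ⟨hLc, T, W, -, hW, ⟨e'⟩⟩ := hL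
  refine of_continuous_injective_pi (f := fun p : K × L =>
    Homeomorph.sumArrowHomeomorphProdArrow.symm ((e p.1 : S → ℝ), (e' p.2 : T → ℝ)))
    (by fun_prop) ?_ ?_
  · exact Homeomorph.injective _ |>.comp <|
      (Subtype.val_injective.comp e.injective).prodMap (Subtype.val_injective.comp e'.injective)
  · exact fun p => (hZ _ (e p.1).2).support_sumElim (hW _ (e' p.2).2)

end IsCorsonCompact

theorem Set.domRestrict_union_injective {α β : Type*} (s t : Set α) :
    Injective fun f : ↥(s ∪ t) → β =>
      (domRestrict₂ (π := fun _ => β) (subset_union_left : s ⊆ s ∪ t) f,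
        domRestrict₂ (π := fun _ => β) (subset_union_right : t ⊆ s ∪ t) f) := by
  intro f g hfg
  obtain ⟨hs, ht⟩ := Prod.ext_iff.1 hfg
  funext ⟨x, hx⟩
  rcases hx with hx | hx
  exacts [congrFun hs ⟨x, hx⟩, congrFun ht ⟨x, hx⟩]

theorem isCorsonCompact_image_domRestrict_union {X : Type*} {Y : Set (X → ℝ)} (hY : IsCompact Y)
    {E₁ E₂ : Set X} (h₁ : IsCorsonCompact.{_, v} (E₁.domRestrict '' Y))
    (h₂ : IsCorsonCompact.{_, v} (E₂.domRestrict '' Y)) :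
    IsCorsonCompact.{_, v} ((E₁ ∪ E₂).domRestrict '' Y) := by
  have : CompactSpace ((E₁ ∪ E₂).domRestrict '' Y) :=
    isCompact_iff_compactSpace.1 (hY.image (Pi.continuous_domRestrict _))
  have mapsTo {s t : Set X} (hst : s ⊆ t) :
      MapsTo (domRestrict₂ hst) (t.domRestrict '' Y) (s.domRestrict '' Y) := by
    rintro _ ⟨y, hy, rfl⟩
    exact ⟨y, hy, rfl⟩
  refine (h₁.prod h₂).of_continuous_injective
    (g := fun f => ((mapsTo subset_union_left).restrict _ _ _ f,
      (mapsTo subset_union_right).restrict _ _ _ f)) ?_ ?_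
  · exact ((Pi.continuous_domRestrict₂ (A := fun _ => ℝ) _).restrict _).prodMk
      ((Pi.continuous_domRestrict₂ (A := fun _ => ℝ) _).restrict _)
  · intro f g hfg
    refine Subtype.val_injective (Set.domRestrict_union_injective E₁ E₂ ?_)
    simpa [Prod.ext_iff, Subtype.ext_iff] using hfg

/-- Proposition 4.1: the system `𝒦` is closed under finite unions. -/
theorem stmt10 {X : Type u} [TopologicalSpace X] (E₁ E₂ : Set X)
    (h₁ : MemK E₁) (h₂ : MemK E₂) : MemK (E₁ ∪ E₂) :=
  ⟨h₁.1.mono subset_union_left, fun Y hcont hY =>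
    isCorsonCompact_image_domRestrict_union hY (h₁.2 Y hcont hY) (h₂.2 Y hcont hY)⟩
end

section
/- Let X be a topological space, Z ⊆ ℝ^X a compact subspace, g : X × Z → ℝ defined by g(x,z) = z(x), E ⊆ X a subset, and x₀ a point in the closure of E. Suppose g(x₀, z') = g(x₀, z'') for all z', z'' ∈ Z with z'|_E = z''|_E. Then for every ε > 0 there is a finite set A ⊆ E such that |g(x₀,z') - g(x₀,z'')| < ε for all z', z'' ∈ Z with z'|_A = z''|_A. -/
/-!
The pairs `(z', z'')` in `Z × Z` whose values at `x₀` are at least `ε` apart form a compact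
set, and by hypothesis no such pair agrees on `E`. The open sets `{p | p.1 e ≠ p.2 e}`, `e ∈ E`,
therefore cover it, and a finite subcover yields `A`.
-/

open Set

theorem IsCompact.exists_finset_forall_not_eqOn {ι Y : Type*} [TopologicalSpace Y] [T2Space Y]
    {K : Set ((ι → Y) × (ι → Y))} (hK : IsCompact K) {E : Set ι}
    (hE : ∀ p ∈ K, ¬EqOn p.1 p.2 E) :
    ∃ A : Finset ι, ↑A ⊆ E ∧ ∀ p ∈ K, ¬EqOn p.1 p.2 A := by
  have hopen : ∀ i ∈ E, IsOpen {p : (ι → Y) × (ι → Y) | p.1 i ≠ p.2 i} :=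
    fun i _ => isOpen_ne_fun (by fun_prop) (by fun_prop)
  have hcover : K ⊆ ⋃ i ∈ E, {p | p.1 i ≠ p.2 i} := fun p hp => by
    simpa [EqOn] using hE p hp
  obtain ⟨b, hbE, hb, hcov⟩ := hK.elim_finite_subcover_image hopen hcover
  refine ⟨hb.toFinset, by simpa using hbE, fun p hp hEq => ?_⟩
  obtain ⟨i, hi, hne⟩ := mem_iUnion₂.1 (hcov hp)
  exact hne (hEq (hb.mem_toFinset.2 hi))

theorem IsCompact.exists_finset_dist_apply_lt_of_eqOn {ι Y : Type*} [MetricSpace Y]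
    {Z : Set (ι → Y)} (hZ : IsCompact Z) {E : Set ι} {x₀ : ι}
    (h : ∀ z ∈ Z, ∀ z' ∈ Z, EqOn z z' E → z x₀ = z' x₀) {ε : ℝ} (hε : 0 < ε) :
    ∃ A : Finset ι, ↑A ⊆ E ∧ ∀ z ∈ Z, ∀ z' ∈ Z, EqOn z z' A → dist (z x₀) (z' x₀) < ε := by
  set K := (Z ×ˢ Z) ∩ {p | ε ≤ dist (p.1 x₀) (p.2 x₀)}
  have hK : IsCompact K := (hZ.prod hZ).inter_right (isClosed_le continuous_const (by fun_prop))
  obtain ⟨A, hAE, hA⟩ := hK.exists_finset_forall_not_eqOn (E := E)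
    fun p ⟨⟨h₁, h₂⟩, hp⟩ hEq => by
      rw [mem_ofPred_eq, h _ h₁ _ h₂ hEq, dist_self] at hp
      linarith
  exact ⟨A, hAE, fun z hz z' hz' hEq => not_le.1 fun hle => hA (z, z') ⟨⟨hz, hz'⟩, hle⟩ hEq⟩

theorem stmt14_general {X : Type*} (Z : Set (X → ℝ))
    (hZ : IsCompact Z) (E : Set X) (x₀ : X)
    (h : ∀ z' z'' : Z, (∀ e ∈ E, (z' : X → ℝ) e = (z'' : X → ℝ) e) →
      (z' : X → ℝ) x₀ = (z'' : X → ℝ) x₀) :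
    ∀ ε > (0 : ℝ), ∃ A : Finset X, ↑A ⊆ E ∧
      ∀ z' z'' : Z, (∀ a ∈ A, (z' : X → ℝ) a = (z'' : X → ℝ) a) →
        |(z' : X → ℝ) x₀ - (z'' : X → ℝ) x₀| < ε := by
  intro ε hε
  obtain ⟨A, hAE, hA⟩ := hZ.exists_finset_dist_apply_lt_of_eqOn
    (fun z hz z' hz' hEq => h ⟨z, hz⟩ ⟨z', hz'⟩ fun e he => hEq he) hε
  exact ⟨A, hAE, fun z' z'' hEq => by
    simpa only [Real.dist_eq] using hA z' z'.2 z'' z''.2 fun a ha => hEq a ha⟩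

/-- Specialization of Proposition 2.2 used in Theorem 4.3: for a compact
`Z ⊆ ℝ^X`, the evaluation `g(x,z) = z(x)`, `E ⊆ X` and `x₀ ∈ cl E`, if
`g(x₀,·)` is determined by restriction to `E`, then for every `ε > 0` it is
`ε`-determined by restriction to some finite `A ⊆ E`. -/
theorem stmt14 {X : Type*} [TopologicalSpace X] (Z : Set (X → ℝ))
    (hZ : IsCompact Z) (E : Set X) (x₀ : X) (hx₀ : x₀ ∈ closure E)
    (h : ∀ z' z'' : Z, (∀ e ∈ E, (z' : X → ℝ) e = (z'' : X → ℝ) e) →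
      (z' : X → ℝ) x₀ = (z'' : X → ℝ) x₀) :
    ∀ ε > (0 : ℝ), ∃ A : Finset X, ↑A ⊆ E ∧
      ∀ z' z'' : Z, (∀ a ∈ A, (z' : X → ℝ) a = (z'' : X → ℝ) a) →
        |(z' : X → ℝ) x₀ - (z'' : X → ℝ) x₀| < ε :=
  stmt14_general Z hZ E x₀ h
end

section
/- Let Y be a compact space, X a topological space, f : X × Y → ℝ separately continuous, and φ : Y → C_p(X) the map φ(y)(x) = f(x,y). Then φ is continuous, Z = φ(Y) is a compact subspace of ℝ^X, the evaluation g : X × Z → ℝ, g(x,z) = z(x), is separately continuous, and f has the Namioka property if and only if g has the Namioka property. -/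
/-!
For compact `Y`, joint continuity of `f` at every point of `{a} × Y` amounts to uniform
convergence `f x → f a` on `Y` as `x → a`. The same holds for `g` on the compact `Z = φ(Y)`, and
since `φ` maps `Y` onto `Z`, uniform convergence on `Y` and on `Z` is the same condition.
-/

open Topology Filter Function

section UniformLimit

variable {ι α β γ X Y : Type*} [UniformSpace β]

theorem Function.Surjective.tendstoUniformly_comp_iff {F : ι → α → β} {f : α → β}
    {p : Filter ι} {s : γ → α} (hs : s.Surjective) :
    TendstoUniformly (fun i => F i ∘ s) (f ∘ s) p ↔ TendstoUniformly F f p := by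
  simp only [TendstoUniformly, comp_apply, hs.forall]

variable [TopologicalSpace X] [TopologicalSpace Y] {F : X → Y → β} {a : X}

theorem TendstoUniformly.continuousAt_uncurry (h : TendstoUniformly F (F a) (𝓝 a)) {y : Y}
    (hy : ContinuousAt (F a) y) : ContinuousAt (uncurry F) (a, y) :=
  TendstoUniformly.tendsto_comp (F := fun q : X × Y => F q.1)
    (fun u hu => continuousAt_fst.eventually (p := fun x => ∀ y, (F a y, F x y) ∈ u) (h u hu))
    hy continuousAt_snd

theorem tendstoUniformly_of_forall_continuousAt_uncurry [CompactSpace Y]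
    (h : ∀ y, ContinuousAt (uncurry F) (a, y)) : TendstoUniformly F (F a) (𝓝 a) := by
  rw [← tendstoLocallyUniformly_iff_tendstoUniformly_of_compactSpace,
    tendstoLocallyUniformly_iff_forall_tendsto]
  intro y
  have hfibre : Tendsto (fun q : X × Y => F a q.2) (𝓝 a ×ˢ 𝓝 y) (𝓝 (F a y)) :=
    ((h y).comp (Continuous.prodMk_right a).continuousAt).tendsto.comp tendsto_snd
  rw [← nhds_prod_eq] at hfibre ⊢
  exact (hfibre.prodMk_nhds (h y)).mono_right (nhds_le_uniformity _)

theorem forall_continuousAt_uncurry_iff_tendstoUniformly [CompactSpace Y]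
    (ha : Continuous (F a)) :
    (∀ y, ContinuousAt (uncurry F) (a, y)) ↔ TendstoUniformly F (F a) (𝓝 a) :=
  ⟨tendstoUniformly_of_forall_continuousAt_uncurry,
    fun h _ => h.continuousAt_uncurry ha.continuousAt⟩

end UniformLimit

/-- The reduction step in Theorem 4.3: for compact `Y`, separately continuous
`f : X × Y → ℝ` and `φ : Y → C_p(X)`, `φ(y)(x) = f(x,y)`, the map `φ` is
continuous, `Z = φ(Y)` is a compact subspace of `ℝ^X`, the evaluation
`g(x,z) = z(x)` on `X × Z` is separately continuous, and `f` has the Namioka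
property iff `g` has the Namioka property. -/
theorem stmt15 {X Y : Type*} [TopologicalSpace X] [TopologicalSpace Y]
    [CompactSpace Y] (f : X → Y → ℝ)
    (hf1 : ∀ y : Y, Continuous fun x => f x y) (hf2 : ∀ x : X, Continuous (f x))
    (φ : Y → X → ℝ) (hφ : φ = fun y x => f x y) :
    Continuous φ ∧
    IsCompact (Set.range φ) ∧
    (∀ x : X, Continuous fun z : Set.range φ => (z : X → ℝ) x) ∧
    (∀ z : Set.range φ, Continuous fun x : X => (z : X → ℝ) x) ∧
    ((∃ A : Set X, Dense A ∧ IsGδ A ∧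
        ∀ a ∈ A, ∀ y : Y, ContinuousAt (fun p : X × Y => f p.1 p.2) (a, y)) ↔
      (∃ A : Set X, Dense A ∧ IsGδ A ∧
        ∀ a ∈ A, ∀ z : Set.range φ,
          ContinuousAt (fun p : X × Set.range φ => (p.2 : X → ℝ) p.1) (a, z))) := by
  have hφc : Continuous φ := hφ ▸ continuous_pi hf2
  have : CompactSpace (Set.range φ) := isCompact_iff_compactSpace.mp (isCompact_range hφc)
  let g : X → Set.range φ → ℝ := fun x z => (z : X → ℝ) x
  have hg (x : X) : Continuous (g x) := (continuous_apply x).comp continuous_subtype_val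
  have hfibres (a : X) :
      (∀ y, ContinuousAt (uncurry f) (a, y)) ↔ ∀ z, ContinuousAt (uncurry g) (a, z) := by
    rw [forall_continuousAt_uncurry_iff_tendstoUniformly (hf2 a),
      forall_continuousAt_uncurry_iff_tendstoUniformly (hg a),
      ← Set.rangeFactorization_surjective.tendstoUniformly_comp_iff]
    subst hφ
    rfl
  refine ⟨hφc, isCompact_range hφc, hg, ?_, ?_⟩
  · rintro ⟨_, y, rfl⟩
    simpa only [hφ] using hf1 y
  · exact exists_congr fun A => and_congr_right' <| and_congr_right' <|
      forall₂_congr fun a _ => hfibres a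
end
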